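/- arXiv:0804.2472 — 3 statements merged into one kernel-verified Lean document; each statement's English description precedes it below -/
import Mathlib

section
/- Let k be a field with char(k) ∤ n+1, n ≥ 2, λ ∈ k, and ζ a primitive (n+1)-th root of unity in k. The fixed point set in the Dwork hypersurface X_λ of the involution σ : (x_0:x_1:x_2:…) ↦ (ζ x_1 : ζ^{-1} x_0 : x_2 : …) is: the hyperplane section {X_0 − ζ X_1 = 0} ∩ X_λ if n is odd, and the union of this hyperplane section with the single point (1 : −ζ^{-1} : 0 : ⋯ : 0) if n is even. -/
noncomputable section

variable (k : Type*) [Field k] (n : ℕ)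

/-- The Dwork hypersurface `X_λ ⊂ ℙ^n`, defined by
`Σ_{i=0}^n X_i^{n+1} + λ·X_0⋯X_n = 0` (a homogeneous condition, hence well defined
on the chosen representative of a projective point). -/
def dworkSet (lam : k) : Set (Projectivization k (Fin (n + 1) → k)) :=
  {x | ∑ i, x.rep i ^ (n + 1) + lam * ∏ i, x.rep i = 0}

/-- Coordinatewise scaling by a tuple of units, as a linear automorphism of `k^{n+1}`. -/
def scaleEquiv (ζ : Fin (n + 1) → kˣ) : (Fin (n + 1) → k) ≃ₗ[k] (Fin (n + 1) → k) :=
  LinearEquiv.piCongrRight fun i => LinearEquiv.smulOfUnit (ζ i)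

/-- Coordinatewise scaling on projective space:
`(ζ_0,…,ζ_n)·(x_0:…:x_n) = (ζ_0x_0:…:ζ_nx_n)`. -/
def scaleP (ζ : Fin (n + 1) → kˣ) :
    Projectivization k (Fin (n + 1) → k) → Projectivization k (Fin (n + 1) → k) :=
  Projectivization.map (scaleEquiv k n ζ).toLinearMap (scaleEquiv k n ζ).injective

/-- The involution `τ` of `ℙ^n` swapping the homogeneous coordinates `X_0` and `X_1`. -/
def swapP : Projectivization k (Fin (n + 1) → k) → Projectivization k (Fin (n + 1) → k) :=
  Projectivization.map (LinearEquiv.funCongrLeft k k (Equiv.swap (0 : Fin (n + 1)) 1)).toLinearMap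
    (LinearEquiv.funCongrLeft k k (Equiv.swap (0 : Fin (n + 1)) 1)).injective

/-- The automorphism `σ = (ζ,ζ^{-1},1,…,1)∘τ` of `ℙ^n`:
`(x_0:x_1:x_2:…) ↦ (ζx_1 : ζ^{-1}x_0 : x_2 : …)`. -/
def sigmaP (ζ : kˣ) :
    Projectivization k (Fin (n + 1) → k) → Projectivization k (Fin (n + 1) → k) :=
  scaleP k n (fun i => if i = 0 then ζ else if i = 1 then ζ⁻¹ else 1) ∘ swapP k n

/-!
A point `[v]` is fixed by `σ` iff `σ̃ v = c • v` for the linear lift `σ̃`. Comparing the first two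
coordinates gives `(c - 1)(v₀ + ζ v₁) = 0`, so either `c = 1`, which is the hyperplane
`X₀ = ζ X₁`, or `v₀ = -ζ v₁` and all other coordinates vanish (as `c ≠ 1`), which is the single
point `(1 : -ζ⁻¹ : 0 : ⋯ : 0)`. That point lies on `X_λ` iff `1 + (-1)^(n+1) = 0`: always for `n`
even, never for `n` odd, since then `2 ∣ n + 1` and so `2 ≠ 0` in `k`.
-/

open Projectivization

namespace Dwork

variable {k : Type*} [Field k] {n : ℕ}

theorem scaleEquiv_apply (c : Fin (n + 1) → kˣ) (v : Fin (n + 1) → k) (i : Fin (n + 1)) :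
    scaleEquiv k n c v i = c i * v i := rfl

def sigmaVec (ζ : kˣ) (v : Fin (n + 1) → k) : Fin (n + 1) → k :=
  fun i => if i = 0 then ζ * v 1 else if i = 1 then (ζ⁻¹ : kˣ) * v 0 else v i

theorem sigmaP_mk_eq_self_iff (ζ : kˣ) (v : Fin (n + 1) → k) (hv : v ≠ 0) :
    sigmaP k n ζ (mk k v hv) = mk k v hv ↔ ∃ c : kˣ, c • v = sigmaVec ζ v := by
  rw [sigmaP, Function.comp_apply, swapP, map_mk, scaleP, map_mk, mk_eq_mk_iff]
  suffices h : (scaleEquiv k n fun i => if i = 0 then ζ else if i = 1 then ζ⁻¹ else 1)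
      ((LinearEquiv.funCongrLeft k k (Equiv.swap (0 : Fin (n + 1)) 1)) v) = sigmaVec ζ v by
    simp only [LinearEquiv.coe_coe, h]
  funext i
  rw [scaleEquiv_apply, LinearEquiv.funCongrLeft_apply, LinearMap.funLeft_apply, sigmaVec]
  by_cases h0 : i = 0
  · simp [h0]
  by_cases h1 : i = 1
  · subst h1
    rw [if_neg h0, if_pos rfl, if_neg h0, if_pos rfl, Equiv.swap_apply_right]
  · simp [h0, h1, Equiv.swap_apply_of_ne_of_ne h0 h1]

theorem exists_smul_eq_sigmaVec_iff [NeZero n] (ζ : kˣ) (v : Fin (n + 1) → k) :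
    (∃ c : kˣ, c • v = sigmaVec ζ v) ↔
      v 0 = ζ * v 1 ∨ (v 0 = -(ζ * v 1) ∧ ∀ i, i ≠ 0 → i ≠ 1 → v i = 0) := by
  have h10 : (1 : Fin (n + 1)) ≠ 0 := Fin.zero_ne_one'.symm
  have hζζ : (ζ : k) * (ζ⁻¹ : kˣ) = 1 := ζ.mul_inv
  constructor
  · rintro ⟨c, hc⟩
    have h0 : c * v 0 = ζ * v 1 := by simpa [sigmaVec, Units.smul_def] using congrFun hc 0
    have h1 : c * v 1 = (ζ⁻¹ : kˣ) * v 0 := by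
      simpa [sigmaVec, Units.smul_def, h10] using congrFun hc 1
    by_cases hc1 : (c : k) = 1
    · left
      simpa [hc1] using h0
    right
    have hc1' : (c : k) - 1 ≠ 0 := sub_ne_zero.mpr hc1
    -- with `a = v 0`, `b = ζ v 1` the equations read `c a = b`, `c b = a`, so `(c - 1)(a + b) = 0`
    have hsum : ((c : k) - 1) * (v 0 + ζ * v 1) = 0 := by
      linear_combination h0 + ζ * h1 + v 0 * hζζ
    refine ⟨by linear_combination (mul_eq_zero.mp hsum).resolve_left hc1', fun i hi0 hi1 => ?_⟩
    have hi : c * v i = v i := by simpa [sigmaVec, Units.smul_def, hi0, hi1] using congrFun hc i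
    exact (mul_eq_zero.mp (by linear_combination hi : ((c : k) - 1) * v i = 0)).resolve_left hc1'
  · rintro (h | ⟨h, hrest⟩)
    · refine ⟨1, funext fun i => ?_⟩
      by_cases hi0 : i = 0
      · simp [sigmaVec, hi0, h]
      by_cases hi1 : i = 1
      · subst hi1
        simp only [sigmaVec, if_neg hi0, ↓reduceIte, one_smul, h]
        linear_combination -(v 1 * hζζ)
      · simp [sigmaVec, hi0, hi1]
    · refine ⟨-1, funext fun i => ?_⟩
      by_cases hi0 : i = 0
      · simp [sigmaVec, hi0, h]
      by_cases hi1 : i = 1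
      · subst hi1
        simp only [sigmaVec, if_neg hi0, ↓reduceIte, Units.neg_smul, one_smul, Pi.neg_apply, h]
        linear_combination v 1 * hζζ
      · simp [sigmaVec, hi0, hi1, hrest i hi0 hi1]

-- spans the `-1`-eigenspace of `sigmaVec ζ`, whose `+1`-eigenspace is `{v₀ = ζ v₁}`
def sigmaNegVec (ζ : kˣ) : Fin (n + 1) → k :=
  fun i => if i = 0 then (1 : k) else if i = 1 then -(ζ⁻¹ : kˣ) else 0

theorem sigmaNegVec_ne_zero (ζ : kˣ) : sigmaNegVec (n := n) ζ ≠ 0 :=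
  fun h => by simpa [sigmaNegVec] using congrFun h 0

theorem mk_eq_mk_sigmaNegVec_iff [NeZero n] (ζ : kˣ) (v : Fin (n + 1) → k) (hv : v ≠ 0) :
    mk k v hv = mk k (sigmaNegVec ζ) (sigmaNegVec_ne_zero ζ) ↔
      v 0 = -(ζ * v 1) ∧ ∀ i, i ≠ 0 → i ≠ 1 → v i = 0 := by
  have h10 : (1 : Fin (n + 1)) ≠ 0 := Fin.zero_ne_one'.symm
  rw [mk_eq_mk_iff]
  constructor
  · rintro ⟨a, rfl⟩
    refine ⟨?_, fun i hi0 hi1 => by simp [sigmaNegVec, hi0, hi1]⟩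
    simp only [Pi.smul_apply, sigmaNegVec, ↓reduceIte, Units.smul_def, smul_eq_mul, mul_one, h10,
      Units.val_inv_eq_inv_val, mul_neg, neg_neg]
    field_simp
  · rintro ⟨h0, hrest⟩
    have hv0 : v 0 ≠ 0 := by
      intro hv0
      have hv1 : v 1 = 0 := by simpa [hv0, ζ.ne_zero] using h0
      refine hv (funext fun i => ?_)
      by_cases hi0 : i = 0
      · rw [hi0, hv0, Pi.zero_apply]
      by_cases hi1 : i = 1
      · rw [hi1, hv1, Pi.zero_apply]
      · exact hrest i hi0 hi1
    refine ⟨Units.mk0 (v 0) hv0, funext fun i => ?_⟩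
    by_cases hi0 : i = 0
    · simp [sigmaNegVec, Units.smul_def, hi0]
    by_cases hi1 : i = 1
    · subst hi1
      simp only [sigmaNegVec, Units.smul_def, Pi.smul_apply, if_neg hi0, ↓reduceIte,
        Units.val_mk0, smul_eq_mul, h0, Units.val_inv_eq_inv_val]
      field_simp
    · simp [sigmaNegVec, hi0, hi1, hrest i hi0 hi1]

theorem mk_mem_dworkSet_iff (lam : k) (v : Fin (n + 1) → k) (hv : v ≠ 0) :
    mk k v hv ∈ dworkSet k n lam ↔ ∑ i, v i ^ (n + 1) + lam * ∏ i, v i = 0 := by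
  obtain ⟨c, hc⟩ := exists_smul_eq_mk_rep k v hv
  have hhom : ∑ i, (c • v) i ^ (n + 1) + lam * ∏ i, (c • v) i =
      (c : k) ^ (n + 1) * (∑ i, v i ^ (n + 1) + lam * ∏ i, v i) := by
    simp only [Pi.smul_apply, Units.smul_def, smul_eq_mul, mul_pow, Finset.prod_mul_distrib,
      Finset.prod_const, Finset.card_univ, Fintype.card_fin, ← Finset.mul_sum]
    ring
  rw [dworkSet, Set.mem_ofPred_eq, ← hc, hhom, mul_eq_zero, or_iff_right (pow_ne_zero _ c.ne_zero)]

theorem mk_sigmaNegVec_mem_dworkSet_iff (hn : 2 ≤ n) (lam : k) (ζ : kˣ) (hζ : ζ ^ (n + 1) = 1) :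
    mk k (sigmaNegVec ζ) (sigmaNegVec_ne_zero ζ) ∈ dworkSet k n lam ↔
      (1 + (-1) ^ (n + 1) : k) = 0 := by
  have : NeZero n := ⟨by omega⟩
  have hζinv : ((ζ⁻¹ : kˣ) : k) ^ (n + 1) = 1 := by
    rw [← Units.val_pow_eq_pow_val, inv_pow, hζ, inv_one, Units.val_one]
  have hsum : ∑ i, sigmaNegVec (n := n) ζ i ^ (n + 1) = 1 + (-1) ^ (n + 1) := by
    rw [Fintype.sum_eq_add 0 1 Fin.zero_ne_one' fun i hi => by simp [sigmaNegVec, hi.1, hi.2]]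
    simp only [sigmaNegVec, if_neg Fin.zero_ne_one'.symm, ↓reduceIte, one_pow]
    rw [neg_pow, hζinv, mul_one]
  have hprod : ∏ i, sigmaNegVec (n := n) ζ i = 0 :=
    Finset.prod_eq_zero (i := ⟨2, by omega⟩) (Finset.mem_univ _)
      (by simp [sigmaNegVec, Fin.ext_iff, Nat.mod_eq_of_lt (by omega : 1 < n + 1)])
  rw [mk_mem_dworkSet_iff, hsum, hprod, mul_zero, add_zero]

theorem sigmaP_eq_self_iff [NeZero n] (ζ : kˣ) (x : Projectivization k (Fin (n + 1) → k)) :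
    sigmaP k n ζ x = x ↔
      x.rep 0 - (ζ : k) * x.rep 1 = 0 ∨ x = mk k (sigmaNegVec ζ) (sigmaNegVec_ne_zero ζ) := by
  have hfix := (sigmaP_mk_eq_self_iff ζ x.rep x.rep_nonzero).trans
    (exists_smul_eq_sigmaVec_iff ζ x.rep)
  have hneg := mk_eq_mk_sigmaNegVec_iff ζ x.rep x.rep_nonzero
  rw [mk_rep] at hfix hneg
  rw [hfix, hneg, sub_eq_zero]

theorem sep_dworkSet_sigmaP_eq_self [NeZero n] (lam : k) (ζ : kˣ) :
    {x ∈ dworkSet k n lam | sigmaP k n ζ x = x} =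
      {x ∈ dworkSet k n lam | x.rep 0 - (ζ : k) * x.rep 1 = 0} ∪
        dworkSet k n lam ∩ {mk k (sigmaNegVec ζ) (sigmaNegVec_ne_zero ζ)} := by
  ext x
  simp only [Set.mem_sep_iff, Set.mem_union, Set.mem_inter_iff, Set.mem_singleton_iff,
    sigmaP_eq_self_iff]
  tauto

end Dwork

open Dwork

theorem stmt8 (hn : 2 ≤ n) (hchar : (n + 1 : k) ≠ 0) (lam : k)
    (ζ : kˣ) (hζ : IsPrimitiveRoot (ζ : k) (n + 1))
    (hp : (fun i : Fin (n + 1) => if i = 0 then (1 : k) else if i = 1 then -(ζ⁻¹ : kˣ) else 0)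
      ≠ 0) :
    (Odd n →
      {x ∈ dworkSet k n lam | sigmaP k n ζ x = x}
        = {x ∈ dworkSet k n lam | x.rep 0 - (ζ : k) * x.rep 1 = 0}) ∧
    (Even n →
      {x ∈ dworkSet k n lam | sigmaP k n ζ x = x}
        = {x ∈ dworkSet k n lam | x.rep 0 - (ζ : k) * x.rep 1 = 0} ∪
          {Projectivization.mk k
            (fun i : Fin (n + 1) => if i = 0 then (1 : k) else if i = 1 then -(ζ⁻¹ : kˣ) else 0)
            hp}) := by
  have : NeZero n := ⟨by omega⟩
  have hmem := mk_sigmaNegVec_mem_dworkSet_iff hn lam ζ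
    (IsPrimitiveRoot.coe_units_iff.mp hζ).pow_eq_one
  rw [sep_dworkSet_sigmaP_eq_self]
  refine ⟨fun hodd => ?_, fun heven => ?_⟩
  · obtain ⟨m, hm⟩ := hodd.add_one
    have h2 : (2 : k) ≠ 0 := fun h2 => hchar <| by
      rw [← Nat.cast_add_one, hm, Nat.cast_add, ← two_mul, h2, zero_mul]
    rw [Set.inter_singleton_eq_empty.mpr, Set.union_empty]
    rwa [hmem, hodd.add_one.neg_one_pow, one_add_one_eq_two]
  · rw [Set.inter_singleton_of_mem (hmem.mpr (by rw [heven.add_one.neg_one_pow, add_neg_cancel]))]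
    rfl
end
end

section
/- Let k[x_0, x_1] be a polynomial ring over a field k in which n+1 is invertible and which contains the (n+1)-th roots of unity. Consider the group Γ = μ_{n+1} ⋊ ℤ/2 acting by ζ·(x_0,x_1) = (ζ x_0, ζ^{-1} x_1) and τ·(x_0,x_1) = (x_1,x_0). Then the ring of invariants k[x_0,x_1]^Γ is the polynomial ring k[s, v] on the two algebraically independent elements s = x_0^{n+1} + x_1^{n+1} and v = x_0 x_1. -/
/-!
Invariance under a primitive `N`-th root of unity `ζ` (here `N = n + 1`) forces every monomial
`x₀^a x₁^b` of an invariant to satisfy `a ≡ b [MOD N]`, and invariance under the swap pairs it with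
`x₀^b x₁^a`. Such a pair sums to `v^b (x₀^{Nm} + x₁^{Nm})` with `a = b + Nm`, and the power sums
`x₀^{Nm} + x₁^{Nm}` lie in `k[s, v]` by the recursion `p_{m+2} = s p_{m+1} - v^N p_m`.

For algebraic independence: `x₀^N` and `x₁^N` are the roots of `T² - sT + v^N`, so `k[x₀, x₁]` is
integral over `k[s, v]`; as `k[x₀, x₁]` has transcendence degree 2, the two generators `s, v` form a
transcendence basis.
-/

namespace MvPolynomial

variable {R : Type*} [CommSemiring R]

lemma aeval_C_mul_X_monomial {σ : Type*} (c : σ → R) (d : σ →₀ ℕ) (a : R) :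
    aeval (fun i => C (c i) * X i) (monomial d a) = monomial d ((d.prod fun i e => c i ^ e) * a) := by
  rw [aeval_monomial, monomial_eq, C_mul, map_finsuppProd]
  simp only [algebraMap_eq, mul_pow, Finsupp.prod_mul, map_pow]
  ring

lemma coeff_aeval_C_mul_X {σ : Type*} (c : σ → R) (p : MvPolynomial σ R) (d : σ →₀ ℕ) :
    coeff d (aeval (fun i => C (c i) * X i) p) = (d.prod fun i e => c i ^ e) * coeff d p := by
  classical
  induction p using MvPolynomial.induction_on' with
  | monomial d' a =>
    rw [aeval_C_mul_X_monomial, coeff_monomial, coeff_monomial]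
    split_ifs with h
    · rw [h]
    · rw [mul_zero]
  | add p q hp hq => rw [map_add, coeff_add, coeff_add, mul_add, hp, hq]

lemma coeff_equivMapDomain_of_rename_eq {σ : Type*} {e : σ ≃ σ} {p : MvPolynomial σ R}
    (hp : rename e p = p) (d : σ →₀ ℕ) :
    coeff (Finsupp.equivMapDomain e d) p = coeff d p := by
  conv_lhs => rw [← hp, Finsupp.equivMapDomain_eq_mapDomain]
  exact coeff_rename_mapDomain _ e.injective p d

/-- Grouping the terms by the `d 1 < d 0` half of each swap orbit, rather than symmetrizing,
avoids dividing by `2`. -/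
lemma eq_sum_monomial_add_monomial_swap_add_sum_diagonal {p : MvPolynomial (Fin 2) R}
    (hp : rename (Equiv.swap (0 : Fin 2) 1) p = p) :
    p = ∑ d ∈ p.support with d 1 < d 0,
          (monomial d (coeff d p) +
            monomial (Finsupp.equivMapDomain (Equiv.swap 0 1) d) (coeff d p)) +
        ∑ d ∈ p.support with d 0 = d 1, monomial d (coeff d p) := by
  classical
  ext e
  have hswap (d : Fin 2 →₀ ℕ) : Finsupp.equivMapDomain (Equiv.swap 0 1) d = e ↔
      d = Finsupp.equivMapDomain (Equiv.swap 0 1) e :=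
    ((Finsupp.equivCongrLeft (Equiv.swap (0 : Fin 2) 1)).eq_symm_apply).symm
  simp only [coeff_add, coeff_sum, coeff_monomial, Finset.sum_add_distrib, hswap,
    Finset.sum_ite_eq', Finset.mem_filter, mem_support_iff, coeff_equivMapDomain_of_rename_eq hp,
    Finsupp.equivMapDomain_apply, Equiv.symm_swap, Equiv.swap_apply_left, Equiv.swap_apply_right]
  by_cases he : coeff e p = 0
  · simp [he]
  · rcases lt_trichotomy (e 0) (e 1) with h | h | h
    · simp [he, h, h.ne, h.not_gt]
    · simp [he, h]
    · simp [he, h, h.ne', h.not_gt]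

end MvPolynomial

lemma isIntegral_of_add_mem_of_mul_mem {S A : Type*} [CommRing S] [CommRing A] [Algebra S A]
    {a b : A} (hadd : a + b ∈ (algebraMap S A).range) (hmul : a * b ∈ (algebraMap S A).range) :
    IsIntegral S a := by
  obtain ⟨s, hs⟩ := hadd
  obtain ⟨v, hv⟩ := hmul
  refine ⟨Polynomial.X ^ 2 - (Polynomial.C s * Polynomial.X - Polynomial.C v),
    Polynomial.monic_X_pow_sub ?_, ?_⟩
  · exact (Polynomial.degree_sub_le _ _).trans_lt (max_lt
      ((Polynomial.degree_C_mul_X_le _).trans_lt (by norm_num))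
      (Polynomial.degree_C_le.trans_lt (by norm_num)))
  · simp [hs, hv]
    ring

open MvPolynomial

namespace DihedralInvariants

/-- `k[s, v]` for `s = x₀^N + x₁^N` and `v = x₀ x₁`. -/
noncomputable def adjoinSV (k : Type*) [Field k] (N : ℕ) : Subalgebra k (MvPolynomial (Fin 2) k) :=
  Algebra.adjoin k {X 0 ^ N + X 1 ^ N, X 0 * X 1}

variable {k : Type*} [Field k]

lemma X_pow_add_X_pow_mem_adjoinSV (N : ℕ) :
    (X 0 ^ N + X 1 ^ N : MvPolynomial (Fin 2) k) ∈ adjoinSV k N :=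
  Algebra.subset_adjoin (Set.mem_insert _ _)

lemma X_mul_X_mem_adjoinSV (N : ℕ) : (X 0 * X 1 : MvPolynomial (Fin 2) k) ∈ adjoinSV k N :=
  Algebra.subset_adjoin (Set.mem_insert_of_mem _ rfl)

lemma X_pow_mul_add_X_pow_mul_mem_adjoinSV (N m : ℕ) :
    (X 0 ^ (N * m) + X 1 ^ (N * m) : MvPolynomial (Fin 2) k) ∈ adjoinSV k N := by
  have hs := X_pow_add_X_pow_mem_adjoinSV (k := k) N
  have hv := X_mul_X_mem_adjoinSV (k := k) N
  induction m using Nat.twoStepInduction with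
  | zero => simpa using add_mem (one_mem (adjoinSV k N)) (one_mem _)
  | one => simpa using hs
  | more m ih₀ ih₁ =>
    have newton : (X 0 ^ (N * (m + 2)) + X 1 ^ (N * (m + 2)) : MvPolynomial (Fin 2) k) =
        (X 0 ^ N + X 1 ^ N) * (X 0 ^ (N * (m + 1)) + X 1 ^ (N * (m + 1))) -
          (X 0 * X 1) ^ N * (X 0 ^ (N * m) + X 1 ^ (N * m)) := by ring
    rw [newton]
    exact sub_mem (mul_mem hs ih₁) (mul_mem (pow_mem hv _) ih₀)

lemma X_pow_mul_X_pow_add_X_pow_mul_X_pow_mem_adjoinSV {N a b : ℕ} (h : a ≡ b [MOD N]) :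
    (X 0 ^ a * X 1 ^ b + X 0 ^ b * X 1 ^ a : MvPolynomial (Fin 2) k) ∈ adjoinSV k N := by
  wlog hba : b ≤ a generalizing a b
  · simpa only [add_comm] using this h.symm (by omega)
  obtain ⟨m, rfl⟩ : ∃ m, a = b + N * m := by
    obtain ⟨m, hm⟩ := (Nat.modEq_iff_dvd' hba).mp h.symm
    exact ⟨m, by omega⟩
  have : (X 0 ^ (b + N * m) * X 1 ^ b + X 0 ^ b * X 1 ^ (b + N * m) : MvPolynomial (Fin 2) k) =
      (X 0 * X 1) ^ b * (X 0 ^ (N * m) + X 1 ^ (N * m)) := by ring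
  rw [this]
  exact mul_mem (pow_mem (X_mul_X_mem_adjoinSV N) _) (X_pow_mul_add_X_pow_mul_mem_adjoinSV N m)

lemma modEq_of_mem_support_of_aeval_eq {N : ℕ} {ζ : kˣ} (hζ : IsPrimitiveRoot ζ N)
    {p : MvPolynomial (Fin 2) k}
    (hp : aeval (fun i : Fin 2 => C (if i = 0 then (ζ : k) else ((ζ⁻¹ : kˣ) : k)) * X i) p = p)
    {d : Fin 2 →₀ ℕ} (hd : d ∈ p.support) : d 0 ≡ d 1 [MOD N] := by
  have hcoeff := congrArg (coeff d) hp
  rw [coeff_aeval_C_mul_X, Finsupp.prod_fintype _ _ (by simp), Fin.prod_univ_two] at hcoeff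
  have hval : ((ζ ^ d 0 * ζ⁻¹ ^ d 1 : kˣ) : k) = 1 := by
    simpa [mem_support_iff.mp hd] using hcoeff
  have hpow : ζ ^ d 0 = ζ ^ d 1 := by
    rwa [Units.val_eq_one, inv_pow, mul_inv_eq_one] at hval
  rwa [pow_eq_pow_iff_modEq, ← hζ.eq_orderOf] at hpow

lemma mem_adjoinSV_of_rename_eq {N : ℕ} {p : MvPolynomial (Fin 2) k}
    (hp : rename (Equiv.swap (0 : Fin 2) 1) p = p) (hmod : ∀ d ∈ p.support, d 0 ≡ d 1 [MOD N]) :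
    p ∈ adjoinSV k N := by
  have hC (c : k) : C c ∈ adjoinSV k N := Subalgebra.algebraMap_mem _ c
  rw [eq_sum_monomial_add_monomial_swap_add_sum_diagonal hp]
  refine add_mem (sum_mem fun d hd => ?_) (sum_mem fun d hd => ?_)
  · rw [monomial_fin_two, monomial_fin_two, mul_assoc, mul_assoc, ← mul_add]
    simp only [Finsupp.equivMapDomain_apply, Equiv.symm_swap, Equiv.swap_apply_left,
      Equiv.swap_apply_right]
    exact mul_mem (hC _)
      (X_pow_mul_X_pow_add_X_pow_mul_X_pow_mem_adjoinSV (hmod d (Finset.mem_filter.mp hd).1))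
  · rw [monomial_fin_two, (Finset.mem_filter.mp hd).2, mul_assoc, ← mul_pow]
    exact mul_mem (hC _) (pow_mem (X_mul_X_mem_adjoinSV N) _)

lemma aeval_C_mul_X_eq_self_of_mem_adjoinSV {N : ℕ} {ζ : kˣ} (hζ : ζ ^ N = 1)
    {p : MvPolynomial (Fin 2) k} (hp : p ∈ adjoinSV k N) :
    aeval (fun i : Fin 2 => C (if i = 0 then (ζ : k) else ((ζ⁻¹ : kˣ) : k)) * X i) p = p := by
  refine (Algebra.adjoin_le (S := AlgHom.equalizer _ (AlgHom.id k _)) ?_ hp : _)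
  rintro _ (rfl | rfl)
  · simp [mul_pow, ← C_pow, ← Units.val_pow_eq_pow_val, hζ]
  · simp only [SetLike.mem_coe, AlgHom.mem_equalizer, map_mul, aeval_X, AlgHom.id_apply,
      ite_true, one_ne_zero, ite_false]
    rw [mul_mul_mul_comm, ← C_mul, Units.mul_inv, C_1, one_mul]

lemma rename_swap_eq_self_of_mem_adjoinSV {N : ℕ} {p : MvPolynomial (Fin 2) k}
    (hp : p ∈ adjoinSV k N) : rename (Equiv.swap (0 : Fin 2) 1) p = p := by
  refine (Algebra.adjoin_le (S := AlgHom.equalizer _ (AlgHom.id k _)) ?_ hp : _)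
  rintro _ (rfl | rfl) <;> simp [add_comm, mul_comm]

lemma isIntegral_adjoinSV {N : ℕ} (hN : 0 < N) :
    Algebra.IsIntegral (adjoinSV k N) (MvPolynomial (Fin 2) k) := by
  have hX (i : Fin 2) : IsIntegral (adjoinSV k N) (X i : MvPolynomial (Fin 2) k) := by
    refine IsIntegral.of_pow hN (isIntegral_of_add_mem_of_mul_mem (b := X (Equiv.swap 0 1 i) ^ N)
      ⟨⟨_, X_pow_add_X_pow_mem_adjoinSV N⟩, ?_⟩ ⟨⟨_, pow_mem (X_mul_X_mem_adjoinSV N) N⟩, ?_⟩) <;>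
    fin_cases i <;> simp [add_comm, mul_pow, mul_comm]
  have htop : (integralClosure (adjoinSV k N) (MvPolynomial (Fin 2) k)).restrictScalars k = ⊤ := by
    rw [eq_top_iff, ← adjoin_range_X, Algebra.adjoin_le_iff]
    rintro _ ⟨i, rfl⟩
    exact hX i
  exact ⟨fun p => (htop ▸ Algebra.mem_top : p ∈ _)⟩

lemma algebraicIndependent_X_pow_add_X_pow_X_mul_X {N : ℕ} (hN : 0 < N) :
    AlgebraicIndependent k ![(X 0 ^ N + X 1 ^ N : MvPolynomial (Fin 2) k), X 0 * X 1] := by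
  have := isIntegral_adjoinSV (k := k) hN
  unfold adjoinSV at this
  have : Algebra.IsAlgebraic (Algebra.adjoin k (Set.range
      ![(X 0 ^ N + X 1 ^ N : MvPolynomial (Fin 2) k), X 0 * X 1])) (MvPolynomial (Fin 2) k) := by
    rw [Matrix.range_cons_cons_empty]
    exact Algebra.IsIntegral.isAlgebraic
  exact (Algebra.IsAlgebraic.isTranscendenceBasis_of_lift_le_trdeg_of_finite k _ (by simp)).1

end DihedralInvariants

open DihedralInvariants in
theorem stmt10_general (n : ℕ) (k : Type*) [Field k]
    (hroots : ∃ ζ : k, IsPrimitiveRoot ζ (n + 1)) :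
    {p : MvPolynomial (Fin 2) k |
        (∀ ζ : kˣ, ζ ^ (n + 1) = 1 →
          aeval (fun i : Fin 2 =>
            C (if i = 0 then (ζ : k) else ((ζ⁻¹ : kˣ) : k)) * X i) p = p) ∧
        rename (Equiv.swap (0 : Fin 2) 1) p = p}
      = (Algebra.adjoin k {X 0 ^ (n + 1) + X 1 ^ (n + 1), X 0 * X 1} :
          Subalgebra k (MvPolynomial (Fin 2) k)) ∧
    AlgebraicIndependent k
      ![(X 0 ^ (n + 1) + X 1 ^ (n + 1) : MvPolynomial (Fin 2) k), X 0 * X 1] := by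
  obtain ⟨ζ, hζ⟩ := hroots
  have hζu : IsPrimitiveRoot (hζ.isUnit n.succ_ne_zero).unit (n + 1) :=
    hζ.isUnit_unit n.succ_ne_zero
  refine ⟨Set.ext fun p => ⟨fun ⟨hscale, hswap⟩ => ?_, fun hp => ?_⟩,
    algebraicIndependent_X_pow_add_X_pow_X_mul_X n.succ_pos⟩
  · exact mem_adjoinSV_of_rename_eq hswap fun d hd =>
      modEq_of_mem_support_of_aeval_eq hζu (hscale _ hζu.pow_eq_one) hd
  · exact ⟨fun ζ hζ => aeval_C_mul_X_eq_self_of_mem_adjoinSV hζ hp,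
      rename_swap_eq_self_of_mem_adjoinSV hp⟩

/-- for the action of `Γ = μ_{n+1} ⋊ ℤ/2` on `k[x_0,x_1]` by
`ζ·(x_0,x_1) = (ζx_0, ζ^{-1}x_1)` and `τ·(x_0,x_1) = (x_1,x_0)`, the ring of invariants
is the polynomial ring on the two algebraically independent elements
`s = x_0^{n+1} + x_1^{n+1}` and `v = x_0x_1`. -/
theorem stmt10 (n : ℕ) (k : Type*) [Field k] (hchar : (n + 1 : k) ≠ 0)
    (hroots : ∃ ζ : k, IsPrimitiveRoot ζ (n + 1)) :
    {p : MvPolynomial (Fin 2) k |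
        (∀ ζ : kˣ, ζ ^ (n + 1) = 1 →
          aeval (fun i : Fin 2 =>
            C (if i = 0 then (ζ : k) else ((ζ⁻¹ : kˣ) : k)) * X i) p = p) ∧
        rename (Equiv.swap (0 : Fin 2) 1) p = p}
      = (Algebra.adjoin k {X 0 ^ (n + 1) + X 1 ^ (n + 1), X 0 * X 1} :
          Subalgebra k (MvPolynomial (Fin 2) k)) ∧
    AlgebraicIndependent k
      ![(X 0 ^ (n + 1) + X 1 ^ (n + 1) : MvPolynomial (Fin 2) k), X 0 * X 1] :=
  stmt10_general n k hroots
end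

section
/- Let k be a field with char(k) ∤ n+1 and λ ∈ k. The Dwork hypersurface X_λ ⊂ ℙ^n defined by Σ_{i=0}^n X_i^{n+1} + λ X_0⋯X_n = 0 is smooth over k if and only if λ^{n+1} ≠ (−(n+1))^{n+1}. -/
/-- for `char(k) ∤ n+1`, the Dwork hypersurface
`Σ_{i=0}^n X_i^{n+1} + λX_0⋯X_n = 0` in `ℙ^n` is smooth over `k` (no common zero in
`ℙ^n(k̄)` of the defining polynomial and all its partial derivatives
`(n+1)X_i^n + λΠ_{j≠i}X_j`) if and only if `λ^{n+1} ≠ (−(n+1))^{n+1}`. -/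
theorem stmt17 (n : ℕ) (k : Type*) [Field k] (hchar : (n + 1 : k) ≠ 0) (lam : k) :
    (∀ v : Fin (n + 1) → AlgebraicClosure k, v ≠ 0 →
      ¬ ((∑ i, v i ^ (n + 1)
            + algebraMap k (AlgebraicClosure k) lam * ∏ i, v i = 0) ∧
        ∀ i : Fin (n + 1),
          (n + 1 : AlgebraicClosure k) * v i ^ n
            + algebraMap k (AlgebraicClosure k) lam * ∏ j ∈ Finset.univ.erase i, v j = 0))
    ↔ lam ^ (n + 1) ≠ (-(n + 1 : k)) ^ (n + 1) := by
  set K := AlgebraicClosure k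
  set φ := algebraMap k K with hφdef
  have hinj : Function.Injective φ := RingHom.injective φ
  have hφN : φ (n + 1 : k) = (n + 1 : K) := by
    simp [map_add, map_natCast, map_one]
  have hNK : (n + 1 : K) ≠ 0 := by
    rw [← hφN]
    exact fun h => hchar (hinj (by simpa using h))
  constructor
  · -- smooth → λ^{n+1} ≠ (-(n+1))^{n+1}
    intro hsm heq
    have hNk' : (-(n + 1 : k)) ≠ 0 := neg_ne_zero.mpr hchar
    obtain ⟨μ, hlam, hμpow⟩ : ∃ μ : k, lam = μ * (-(n + 1 : k)) ∧ μ ^ (n + 1) = 1 := by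
      refine ⟨lam / (-(n + 1 : k)), (div_mul_cancel₀ lam hNk').symm, ?_⟩
      rw [div_pow, heq, div_self (pow_ne_zero _ hNk')]
    have hμne : μ ≠ 0 := by
      intro h; rw [h] at hμpow; simp at hμpow
    have hlamμ : lam * μ ^ n = -(n + 1 : k) := by
      calc lam * μ ^ n = -(n + 1 : k) * μ ^ (n + 1) := by rw [hlam]; ring
        _ = -(n + 1 : k) := by rw [hμpow, mul_one]
    have hμnn : μ ^ (n * n) = μ := by
      have h1 : μ ^ (n * n) * μ ^ n = 1 := by
        rw [← pow_add]
        have : n * n + n = (n + 1) * n := by ring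
        rw [this, pow_mul, hμpow, one_pow]
      have h2 : μ ^ n * μ = 1 := by rw [← pow_succ]; exact hμpow
      calc μ ^ (n * n) = μ ^ (n * n) * (μ ^ n * μ) := by rw [h2, mul_one]
        _ = (μ ^ (n * n) * μ ^ n) * μ := by ring
        _ = μ := by rw [h1, one_mul]
    set v : Fin (n + 1) → K := fun i => if i = 0 then φ (μ ^ n) else 1 with hvdef
    have hv0 : v 0 = φ (μ ^ n) := by simp [hvdef]
    have hvne : v ≠ 0 := by
      intro h
      have h0 : v 0 = 0 := by rw [h]; rfl
      rw [hv0] at h0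
      exact pow_ne_zero n hμne (hinj (by simpa using h0))
    have hprod : (∏ i, v i) = φ (μ ^ n) := by
      rw [hvdef]
      rw [Finset.prod_ite_eq' Finset.univ (0 : Fin (n + 1)) (fun _ => φ (μ ^ n))]
      simp
    have hpow1 : ∀ i : Fin (n + 1), v i ^ (n + 1) = 1 := by
      intro i
      rw [hvdef]
      by_cases h : i = 0
      · simp only [h, if_pos]
        rw [← map_pow, ← pow_mul, mul_comm, pow_mul, hμpow, one_pow, map_one]
      · simp [h]
    refine hsm v hvne ⟨?_, ?_⟩
    · -- F = 0
      have hsum : (∑ i, v i ^ (n + 1)) = (n + 1 : K) := by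
        simp [hpow1]
      rw [hsum, hprod, ← map_mul, hlamμ, map_neg, hφN]
      ring
    · intro i
      by_cases h : i = 0
      · subst h
        have he : (∏ j ∈ Finset.univ.erase (0 : Fin (n + 1)), v j) = 1 := by
          apply Finset.prod_eq_one
          intro j hj
          simp [hvdef, Finset.ne_of_mem_erase hj]
        rw [he, hv0, mul_one, ← map_pow, ← pow_mul]
        have hkey : (n + 1 : k) * μ ^ (n * n) + lam = 0 := by
          rw [hμnn, hlam]; ring
        calc (n + 1 : K) * φ (μ ^ (n * n)) + φ lam
            = φ ((n + 1 : k) * μ ^ (n * n) + lam) := by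
              rw [map_add, map_mul, hφN]
          _ = 0 := by rw [hkey, map_zero]
      · have he : (∏ j ∈ Finset.univ.erase i, v j) = φ (μ ^ n) := by
          apply Finset.prod_eq_single_of_mem (0 : Fin (n + 1))
          · exact Finset.mem_erase.mpr ⟨Ne.symm h, Finset.mem_univ _⟩
          · intro j _ hj; simp [hvdef, hj]
        have hvi : v i = 1 := by simp [hvdef, h]
        rw [he, hvi, one_pow, mul_one, ← map_mul, hlamμ, map_neg, hφN]
        ring
  · -- λ^{n+1} ≠ … → smooth
    intro hne v hvne hsing
    obtain ⟨-, hpart⟩ := hsing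
    have key : ∀ i : Fin (n + 1),
        (n + 1 : K) * v i ^ (n + 1) = -(φ lam * ∏ j, v j) := by
      intro i
      have h := hpart i
      have hm : v i * ∏ j ∈ Finset.univ.erase i, v j = ∏ j, v j :=
        Finset.mul_prod_erase _ _ (Finset.mem_univ i)
      linear_combination v i * h - φ lam * hm
    by_cases hPz : (∏ j, v j) = 0
    · have hvz : ∀ i, v i = 0 := by
        intro i
        have h := key i
        rw [hPz, mul_zero, neg_zero] at h
        have h0 : v i ^ (n + 1) = 0 := (mul_eq_zero.mp h).resolve_left hNK
        exact pow_eq_zero_iff (Nat.succ_ne_zero n) |>.mp h0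
      exact hvne (funext hvz)
    · have hPow : ((n + 1 : K)) ^ (n + 1) * (∏ j, v j) ^ (n + 1)
          = (-(φ lam)) ^ (n + 1) * (∏ j, v j) ^ (n + 1) := by
        have h1 : (∏ i : Fin (n + 1), ((n + 1 : K) * v i ^ (n + 1)))
            = ((n + 1 : K)) ^ (n + 1) * (∏ j, v j) ^ (n + 1) := by
          rw [Finset.prod_mul_distrib]
          simp [← Finset.prod_pow]
        have h2 : (∏ i : Fin (n + 1), ((n + 1 : K) * v i ^ (n + 1)))
            = (-(φ lam * ∏ j, v j)) ^ (n + 1) := by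
          rw [Finset.prod_congr rfl (fun i _ => key i)]
          simp
        rw [h1.symm.trans h2]
        ring
      have hmain : ((n + 1 : K)) ^ (n + 1) = (-(φ lam)) ^ (n + 1) :=
        mul_right_cancel₀ (pow_ne_zero _ hPz) hPow
      apply hne
      apply hinj
      rw [map_pow, map_pow, map_neg, hφN]
      rw [neg_pow] at hmain ⊢
      rw [hmain, ← mul_assoc, ← mul_pow]
      simp
end
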